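/- In ℰ_n(u), for all i, j with |i−j| = 1, writing T_k⁻¹ := T_k + (u−1)E_kT_k + (1−u)E_k, one has E_jT_i⁻¹T_j = T_i⁻¹T_jE_i. -/

import Mathlib

noncomputable section

open FreeAlgebra

/-- The base field `K = ℂ(u)`, the field of rational functions over `ℂ`. -/
abbrev K : Type := RatFunc ℂ

/-- The distinguished element `u` of `K = ℂ(u)`. -/
def u : K := RatFunc.X

/-- Generators of the algebra `ℰ_n(u)`: `T i` and `E i` for `i` ranging over `n - 1` indices. -/
inductive Gen (n : ℕ) : Type
  | T : Fin (n - 1) → Gen n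
  | E : Fin (n - 1) → Gen n

/-- The free `K`-algebra on the generators. -/
abbrev FA (n : ℕ) : Type := FreeAlgebra K (Gen n)

def fT {n : ℕ} (i : Fin (n - 1)) : FA n := ι K (Gen.T i)
def fE {n : ℕ} (i : Fin (n - 1)) : FA n := ι K (Gen.E i)

/-- The defining relations of `ℰ_n(u)`. -/
inductive EnRel (n : ℕ) : FA n → FA n → Prop
  | TTfar {i j : Fin (n - 1)} : 1 < Nat.dist i j →
      EnRel n (fT i * fT j) (fT j * fT i)
  | braid {i j : Fin (n - 1)} : Nat.dist i j = 1 →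
      EnRel n (fT i * fT j * fT i) (fT j * fT i * fT j)
  | Eidem (i : Fin (n - 1)) : EnRel n (fE i * fE i) (fE i)
  | EE (i j : Fin (n - 1)) : EnRel n (fE i * fE j) (fE j * fE i)
  | ET (i : Fin (n - 1)) : EnRel n (fE i * fT i) (fT i * fE i)
  | ETfar {i j : Fin (n - 1)} : 1 < Nat.dist i j →
      EnRel n (fE i * fT j) (fT j * fE i)
  | ETT {i j : Fin (n - 1)} : Nat.dist i j = 1 →
      EnRel n (fE j * (fT i * fT j)) (fT i * fT j * fE i)
  | EET {i j : Fin (n - 1)} : Nat.dist i j = 1 →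
      EnRel n (fE i * fE j * fT j) (fE i * fT j * fE i)
  | ETE {i j : Fin (n - 1)} : Nat.dist i j = 1 →
      EnRel n (fE i * fT j * fE i) (fT j * (fE i * fE j))
  | Tsq (i : Fin (n - 1)) :
      EnRel n (fT i * fT i) (1 + (u⁻¹ - 1) • (fE i * (1 - fT i)))

/-- The algebra `ℰ_n(u)`, as a quotient of the free algebra by the defining relations. -/
abbrev En (n : ℕ) : Type := RingQuot (EnRel n)

/-- The generator `T i` of `ℰ_n(u)`. -/
def T {n : ℕ} (i : Fin (n - 1)) : En n := RingQuot.mkAlgHom K (EnRel n) (fT i)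

/-- The generator `E i` of `ℰ_n(u)`. -/
def E {n : ℕ} (i : Fin (n - 1)) : En n := RingQuot.mkAlgHom K (EnRel n) (fE i)

/-- The element `T_k⁻¹ := T_k + (u-1) E_k T_k + (1-u) E_k`, which is a two-sided
inverse of `T_k` in `ℰ_n(u)`. -/
def Tinv {n : ℕ} (k : Fin (n - 1)) : En n :=
  T k + (u - 1) • (E k * T k) + (1 - u) • E k

/-! The elements `X` with `E_j X = X E_i` form a `K`-submodule that is stable under left
multiplication by `E_i` (because the idempotents commute). Expanding
`T_i⁻¹ T_j = T_i T_j + (u - 1) E_i (T_i T_j) + (1 - u) E_i T_j`, the first summand lies in it by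
relation (7), the second then follows, and the third by relations (4) and (8). -/

namespace En

variable {n : ℕ}

theorem E_mul_E_comm (i j : Fin (n - 1)) : E i * E j = E j * E i := by
  simpa [E, map_mul] using RingQuot.mkAlgHom_rel K (EnRel.EE i j)

theorem E_mul_T_mul_T {i j : Fin (n - 1)} (hij : Nat.dist i j = 1) :
    E j * (T i * T j) = T i * T j * E i := by
  simpa [T, E, map_mul] using RingQuot.mkAlgHom_rel K (EnRel.ETT hij)

theorem E_mul_E_mul_T {i j : Fin (n - 1)} (hij : Nat.dist i j = 1) :
    E i * E j * T j = E i * T j * E i := by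
  simpa [T, E, map_mul] using RingQuot.mkAlgHom_rel K (EnRel.EET hij)

def intertwining (i j : Fin (n - 1)) : Submodule K (En n) where
  carrier := {X | E j * X = X * E i}
  zero_mem' := by simp
  add_mem' {X Y} (hX : E j * X = X * E i) (hY : E j * Y = Y * E i) :=
    show E j * (X + Y) = (X + Y) * E i by rw [mul_add, add_mul, hX, hY]
  smul_mem' c X (hX : E j * X = X * E i) :=
    show E j * c • X = c • X * E i by rw [mul_smul_comm, smul_mul_assoc, hX]

theorem mem_intertwining {i j : Fin (n - 1)} {X : En n} :
    X ∈ intertwining i j ↔ E j * X = X * E i :=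
  Iff.rfl

theorem E_mul_mem_intertwining {i j : Fin (n - 1)} {X : En n} (hX : X ∈ intertwining i j) :
    E i * X ∈ intertwining i j := by
  rw [mem_intertwining] at hX ⊢
  rw [← mul_assoc, E_mul_E_comm, mul_assoc, hX, mul_assoc]

theorem T_mul_T_mem_intertwining {i j : Fin (n - 1)} (hij : Nat.dist i j = 1) :
    T i * T j ∈ intertwining i j :=
  E_mul_T_mul_T hij

theorem E_mul_T_mem_intertwining {i j : Fin (n - 1)} (hij : Nat.dist i j = 1) :
    E i * T j ∈ intertwining i j := by
  rw [mem_intertwining, ← mul_assoc, E_mul_E_comm, E_mul_E_mul_T hij]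

theorem Tinv_mul_T_mem_intertwining {i j : Fin (n - 1)} (hij : Nat.dist i j = 1) :
    Tinv i * T j ∈ intertwining i j := by
  have hTinv : Tinv i * T j =
      T i * T j + (u - 1) • (E i * (T i * T j)) + (1 - u) • (E i * T j) := by
    simp only [Tinv, add_mul, smul_mul_assoc, mul_assoc]
  have hTT := T_mul_T_mem_intertwining hij
  rw [hTinv]
  exact add_mem (add_mem hTT (Submodule.smul_mem _ _ (E_mul_mem_intertwining hTT)))
    (Submodule.smul_mem _ _ (E_mul_T_mem_intertwining hij))

end En

theorem stmt12_general (n : ℕ) (i j : Fin (n - 1)) (hij : Nat.dist i j = 1) :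
    E j * (Tinv i * T j) = Tinv i * T j * E i :=
  En.Tinv_mul_T_mem_intertwining hij

/-- For `|i - j| = 1`: `E_j T_i⁻¹ T_j = T_i⁻¹ T_j E_i`. -/
theorem stmt12 (n : ℕ) (hn : 2 ≤ n) (i j : Fin (n - 1)) (hij : Nat.dist i j = 1) :
    E j * (Tinv i * T j) = Tinv i * T j * E i :=
  stmt12_general n i j hij
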